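/- arXiv:2107.01515 — 8 statements merged into one kernel-verified Lean document; each statement's English description precedes it below -/
import Mathlib

section
/- Let B be a complex Banach space and p a norm-one continuous linear functional on B. For λ, λ' in the unit circle 𝕋, define F_{p,λ} = {a ∈ S(B) : p(a) = λ}. If both F_{p,λ} and F_{p,λ'} are nonempty, then the Hausdorff distance between F_{p,λ} and F_{p,λ'} equals |λ − λ'|. -/
/-!
The rotation `a ↦ (λ'/λ) • a` maps `F_{p,λ}` into `F_{p,λ'}` and moves each point by exactly
`|λ - λ'|`, so `d_H ≤ |λ - λ'|`. Conversely, as `‖p‖ = 1`, `|λ - λ'| = |p (a - b)| ≤ ‖a - b‖`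
for all `a ∈ F_{p,λ}` and `b ∈ F_{p,λ'}`.
-/

open Metric Bornology

theorem Metric.le_hausdorffDist_of_le_dist {X : Type*} [PseudoMetricSpace X] {s t : Set X}
    {r : ℝ} (hs : s.Nonempty) (ht : t.Nonempty) (hs_bdd : IsBounded s) (ht_bdd : IsBounded t)
    (h : ∀ x ∈ s, ∀ y ∈ t, r ≤ dist x y) : r ≤ hausdorffDist s t := by
  obtain ⟨x, hx⟩ := hs
  calc r ≤ infDist x t := (le_infDist ht).2 (h x hx)
    _ ≤ hausdorffDist s t :=
      infDist_le_hausdorffDist_of_mem hx (hausdorffEDist_ne_top_of_nonempty_of_bounded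
        ⟨x, hx⟩ ht hs_bdd ht_bdd)

section UnitFace

variable {𝕜 B : Type*} [NontriviallyNormedField 𝕜] [SeminormedAddCommGroup B] [NormedSpace 𝕜 B]

def unitFace (p : StrongDual 𝕜 B) (μ : 𝕜) : Set B := {a : B | ‖a‖ = 1 ∧ p a = μ}

variable {p : StrongDual 𝕜 B} {μ ν : 𝕜} {a b : B}

theorem unitFace_subset_sphere : unitFace p μ ⊆ sphere (0 : B) 1 :=
  fun _ ha ↦ mem_sphere_zero_iff_norm.2 ha.1

theorem isBounded_unitFace : IsBounded (unitFace p μ) :=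
  isBounded_sphere.subset unitFace_subset_sphere

theorem div_smul_mem_unitFace (hμ : ‖μ‖ = 1) (hν : ‖ν‖ = 1) (ha : a ∈ unitFace p μ) :
    (ν / μ) • a ∈ unitFace p ν := by
  have hμ0 : μ ≠ 0 := norm_ne_zero_iff.1 (by rw [hμ]; exact one_ne_zero)
  refine ⟨?_, ?_⟩
  · rw [norm_smul, ha.1, norm_div, hμ, hν, div_one, mul_one]
  · rw [map_smul, ha.2, smul_eq_mul, div_mul_cancel₀ ν hμ0]

theorem dist_div_smul_self (hμ : ‖μ‖ = 1) (ha : ‖a‖ = 1) :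
    dist a ((ν / μ) • a) = ‖μ - ν‖ := by
  have hμ0 : μ ≠ 0 := norm_ne_zero_iff.1 (by rw [hμ]; exact one_ne_zero)
  have hsub : a - (ν / μ) • a = ((μ - ν) / μ) • a := by
    rw [sub_div, div_self hμ0, sub_smul, one_smul]
  rw [dist_eq_norm, hsub, norm_smul, ha, mul_one, norm_div, hμ, div_one]

theorem norm_sub_le_dist_of_mem_unitFace (hp : ‖p‖ ≤ 1) (ha : a ∈ unitFace p μ)
    (hb : b ∈ unitFace p ν) : ‖μ - ν‖ ≤ dist a b :=
  calc ‖μ - ν‖ = ‖p (a - b)‖ := by rw [map_sub, ha.2, hb.2]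
    _ ≤ ‖p‖ * ‖a - b‖ := p.le_opNorm _
    _ ≤ dist a b := by rw [dist_eq_norm]; exact mul_le_of_le_one_left (norm_nonneg _) hp

theorem hausdorffDist_unitFace_le (hμ : ‖μ‖ = 1) (hν : ‖ν‖ = 1) :
    hausdorffDist (unitFace p μ) (unitFace p ν) ≤ ‖μ - ν‖ := by
  refine hausdorffDist_le_of_mem_dist (norm_nonneg _) (fun a ha ↦ ?_) (fun b hb ↦ ?_)
  · exact ⟨_, div_smul_mem_unitFace hμ hν ha, (dist_div_smul_self hμ ha.1).le⟩
  · refine ⟨_, div_smul_mem_unitFace hν hμ hb, ?_⟩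
    rw [dist_div_smul_self hν hb.1, norm_sub_rev]

theorem hausdorffDist_unitFace (hp : ‖p‖ ≤ 1) (hμ : ‖μ‖ = 1) (hν : ‖ν‖ = 1)
    (hμne : (unitFace p μ).Nonempty) (hνne : (unitFace p ν).Nonempty) :
    hausdorffDist (unitFace p μ) (unitFace p ν) = ‖μ - ν‖ :=
  le_antisymm (hausdorffDist_unitFace_le hμ hν) <|
    le_hausdorffDist_of_le_dist hμne hνne isBounded_unitFace isBounded_unitFace
      fun _ ha _ hb ↦ norm_sub_le_dist_of_mem_unitFace hp ha hb

end UnitFace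

theorem stmt1_general {B : Type*} [NormedAddCommGroup B] [NormedSpace ℂ B]
    (p : StrongDual ℂ B) (hp : ‖p‖ = 1)
    (lam lam' : ℂ) (hlam : ‖lam‖ = 1) (hlam' : ‖lam'‖ = 1)
    (h₁ : ({a : B | ‖a‖ = 1 ∧ p a = lam}).Nonempty)
    (h₂ : ({a : B | ‖a‖ = 1 ∧ p a = lam'}).Nonempty) :
    Metric.hausdorffDist {a : B | ‖a‖ = 1 ∧ p a = lam} {a : B | ‖a‖ = 1 ∧ p a = lam'}
      = ‖lam - lam'‖ :=
  hausdorffDist_unitFace hp.le hlam hlam' h₁ h₂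

/-- For a norm-one functional `p` on a complex Banach space and
unimodular `λ, λ'`, if the faces `F_{p,λ}` and `F_{p,λ'}` are nonempty then
their Hausdorff distance is `|λ - λ'|`. -/
theorem stmt1 {B : Type*} [NormedAddCommGroup B] [NormedSpace ℂ B] [CompleteSpace B]
    (p : StrongDual ℂ B) (hp : ‖p‖ = 1)
    (lam lam' : ℂ) (hlam : ‖lam‖ = 1) (hlam' : ‖lam'‖ = 1)
    (h₁ : ({a : B | ‖a‖ = 1 ∧ p a = lam}).Nonempty)
    (h₂ : ({a : B | ‖a‖ = 1 ∧ p a = lam'}).Nonempty) :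
    Metric.hausdorffDist {a : B | ‖a‖ = 1 ∧ p a = lam} {a : B | ‖a‖ = 1 ∧ p a = lam'}
      = ‖lam - lam'‖ :=
  stmt1_general p hp lam lam' hlam hlam' h₁ h₂
end

section
/- Let B be a complex Banach space, and let p, p' be norm-one continuous linear functionals on B. Suppose γ, γ' ∈ 𝕋 are such that F_{p,γ} ∩ F_{p',−γ'} is nonempty and F_{p',γ'} is nonempty. Then the Hausdorff distance between F_{p,γ} and F_{p',γ'} equals 2. -/
/-! The upper bound holds for any two nonempty subsets of the unit sphere. For the lower bound,
take `x ∈ F_{p,γ} ∩ F_{p',-γ'}`: every `y ∈ F_{p',γ'}` satisfies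
`2 = ‖p' x - p' y‖ ≤ ‖x - y‖`, so `x` is at distance at least `2` from `F_{p',γ'}`. -/

open Metric Bornology

namespace Metric

variable {X : Type*} [PseudoMetricSpace X] {s t : Set X}

theorem hausdorffDist_le_two_mul_of_subset_closedBall {c : X} {r : ℝ} (hs : s.Nonempty)
    (ht : t.Nonempty) (hsr : s ⊆ closedBall c r) (htr : t ⊆ closedBall c r) :
    hausdorffDist s t ≤ 2 * r := by
  obtain ⟨x, hx⟩ := hs
  have hr : 0 ≤ r := nonneg_of_mem_closedBall (hsr hx)
  calc hausdorffDist s t ≤ diam (s ∪ t) :=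
        hausdorffDist_le_diam ⟨x, hx⟩ (isBounded_closedBall.subset hsr) ht
          (isBounded_closedBall.subset htr)
    _ ≤ diam (closedBall c r) := diam_mono (Set.union_subset hsr htr) isBounded_closedBall
    _ ≤ 2 * r := diam_closedBall hr

theorem le_hausdorffDist_of_forall_le_dist {x : X} {r : ℝ} (hx : x ∈ s) (ht : t.Nonempty)
    (bs : IsBounded s) (bt : IsBounded t) (h : ∀ y ∈ t, r ≤ dist x y) :
    r ≤ hausdorffDist s t :=
  ((le_infDist ht).2 h).trans <| infDist_le_hausdorffDist_of_mem hx <|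
    hausdorffEDist_ne_top_of_nonempty_of_bounded ⟨x, hx⟩ ht bs bt

end Metric

theorem ContinuousLinearMap.two_mul_norm_le_dist_of_apply_eq_neg {𝕜 E : Type*} [RCLike 𝕜]
    [SeminormedAddCommGroup E] [NormedSpace 𝕜 E] {f : StrongDual 𝕜 E} (hf : ‖f‖ ≤ 1)
    {x y : E} {c : 𝕜} (hx : f x = -c) (hy : f y = c) : 2 * ‖c‖ ≤ dist x y :=
  calc 2 * ‖c‖ = dist (f x) (f y) := by
        rw [hx, hy, dist_eq_norm, ← neg_add', norm_neg, ← two_mul, norm_mul, RCLike.norm_two]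
    _ ≤ ‖f‖ * dist x y := f.dist_le_opNorm x y
    _ ≤ dist x y := mul_le_of_le_one_left dist_nonneg hf

theorem stmt2_general {B : Type*} [NormedAddCommGroup B] [NormedSpace ℂ B]
    (p p' : StrongDual ℂ B) (hp' : ‖p'‖ = 1)
    (γ γ' : ℂ) (hγ' : ‖γ'‖ = 1)
    (h₁ : ({a : B | ‖a‖ = 1 ∧ p a = γ} ∩ {a : B | ‖a‖ = 1 ∧ p' a = -γ'}).Nonempty)
    (h₂ : ({a : B | ‖a‖ = 1 ∧ p' a = γ'}).Nonempty) :
    Metric.hausdorffDist {a : B | ‖a‖ = 1 ∧ p a = γ} {a : B | ‖a‖ = 1 ∧ p' a = γ'}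
      = 2 := by
  obtain ⟨x, hxs, -, hxp'⟩ := h₁
  obtain ⟨y, hyt⟩ := h₂
  have hsphere (f : StrongDual ℂ B) (c : ℂ) : {a : B | ‖a‖ = 1 ∧ f a = c} ⊆ sphere 0 1 :=
    fun a ha => mem_sphere_zero_iff_norm.2 ha.1
  apply le_antisymm
  · simpa using hausdorffDist_le_two_mul_of_subset_closedBall ⟨x, hxs⟩ ⟨y, hyt⟩
      ((hsphere p γ).trans sphere_subset_closedBall)
      ((hsphere p' γ').trans sphere_subset_closedBall)
  · refine le_hausdorffDist_of_forall_le_dist hxs ⟨y, hyt⟩ (isBounded_sphere.subset (hsphere p γ))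
      (isBounded_sphere.subset (hsphere p' γ')) fun z hz => ?_
    simpa [hγ'] using p'.two_mul_norm_le_dist_of_apply_eq_neg hp'.le hxp' hz.2

/-- If `F_{p,γ} ∩ F_{p',-γ'} ≠ ∅` and `F_{p',γ'} ≠ ∅`, then the
Hausdorff distance between `F_{p,γ}` and `F_{p',γ'}` equals `2`. -/
theorem stmt2 {B : Type*} [NormedAddCommGroup B] [NormedSpace ℂ B] [CompleteSpace B]
    (p p' : StrongDual ℂ B) (hp : ‖p‖ = 1) (hp' : ‖p'‖ = 1)
    (γ γ' : ℂ) (hγ : ‖γ‖ = 1) (hγ' : ‖γ'‖ = 1)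
    (h₁ : ({a : B | ‖a‖ = 1 ∧ p a = γ} ∩ {a : B | ‖a‖ = 1 ∧ p' a = -γ'}).Nonempty)
    (h₂ : ({a : B | ‖a‖ = 1 ∧ p' a = γ'}).Nonempty) :
    Metric.hausdorffDist {a : B | ‖a‖ = 1 ∧ p a = γ} {a : B | ‖a‖ = 1 ∧ p' a = γ'}
      = 2 :=
  stmt2_general p p' hp' γ γ' hγ' h₁ h₂
end

section
/- Let B be a real or complex Banach space, p a continuous linear functional of norm one on B, and α a scalar with |α| ≤ 1, α ≠ 0. Define M_{p,α} = {a ∈ S(B) : d(a, F_{p,α/|α|}) ≤ 1 − |α| and d(a, F_{p,−α/|α|}) ≤ 1 + |α|}, where F_{p,λ} = {a ∈ S(B) : p(a) = λ}. Then M_{p,α} ⊆ {a ∈ S(B) : p(a) = α}. -/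
/-!
With `u = α / |α|`, a norm-one functional turns the two distance bounds into
`|p a - u| ≤ 1 - |α|` and `|p a + u| ≤ 1 + |α|`. As `|2u| = 2`, the triangle inequality for
`2u = (p a + u) + (u - p a)` is then an equality, so by strict convexity of the scalar field
(as a real space) `p a + u` and `u - p a` point the same way; their lengths `1 ± |α|` force
`p a = |α| u = α`.
-/

open Metric Set

theorem LipschitzWith.edist_le_infEDist_of_mapsTo {α β : Type*} [PseudoEMetricSpace α]
    [PseudoEMetricSpace β] {f : α → β} (hf : LipschitzWith 1 f) {s : Set α} {c : β}
    (hs : MapsTo f s {c}) (x : α) : edist (f x) c ≤ infEDist x s :=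
  le_infEDist.2 fun y hy => by simpa [Set.mem_singleton_iff.1 (hs hy)] using hf.edist_le_mul x y

theorem eq_smul_of_norm_sub_le_of_norm_add_le {E : Type*} [NormedAddCommGroup E]
    [NormedSpace ℝ E] [StrictConvexSpace ℝ E] {u z : E} {r : ℝ} (hu : ‖u‖ = 1)
    (h₁ : ‖z - u‖ ≤ 1 - r) (h₂ : ‖z + u‖ ≤ 1 + r) : z = r • u := by
  have hsum : (z + u) + (u - z) = (2 : ℝ) • u := by module
  have hnorm_sum : ‖(z + u) + (u - z)‖ = 2 := by
    rw [hsum, norm_smul, hu, Real.norm_two, mul_one]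
  have htri : ‖(z + u) + (u - z)‖ = ‖z + u‖ + ‖u - z‖ := by
    refine le_antisymm (norm_add_le _ _) ?_
    rw [hnorm_sum, norm_sub_rev]
    linarith
  have hadd : ‖z + u‖ = 1 + r := by rw [norm_sub_rev] at htri; linarith
  have hsub : ‖u - z‖ = 1 - r := by linarith
  have hray := (sameRay_iff_norm_add.2 htri).norm_smul_eq
  rw [hadd, hsub] at hray
  linear_combination (norm := module) (-(1 / 2 : ℝ)) • hray

theorem stmt3_general {𝕜 : Type*} [RCLike 𝕜] {B : Type*} [NormedAddCommGroup B]
    [NormedSpace 𝕜 B]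
    (p : StrongDual 𝕜 B) (hp : ‖p‖ = 1)
    (α : 𝕜) (hα₁ : ‖α‖ ≤ 1) (hα₀ : α ≠ 0) :
    {a : B | ‖a‖ = 1 ∧
        EMetric.infEdist a {b : B | ‖b‖ = 1 ∧ p b = α / (‖α‖ : 𝕜)} ≤
          ENNReal.ofReal (1 - ‖α‖) ∧
        EMetric.infEdist a {b : B | ‖b‖ = 1 ∧ p b = -(α / (‖α‖ : 𝕜))} ≤
          ENNReal.ofReal (1 + ‖α‖)} ⊆
      {a : B | ‖a‖ = 1 ∧ p a = α} := by
  rintro a ⟨ha, h₁, h₂⟩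
  refine ⟨ha, ?_⟩
  set u : 𝕜 := α / (‖α‖ : 𝕜)
  have hα : (‖α‖ : 𝕜) ≠ 0 := RCLike.ofReal_ne_zero.2 (norm_ne_zero_iff.2 hα₀)
  have hu : ‖u‖ = 1 := by simp [u, hα₀]
  have hp₁ : LipschitzWith 1 p := by
    simpa [show ‖p‖₊ = 1 from NNReal.coe_eq_one.1 hp] using p.lipschitz
  have hd₁ : dist (p a) u ≤ 1 - ‖α‖ := (edist_le_ofReal (by linarith)).1
    ((hp₁.edist_le_infEDist_of_mapsTo (fun b hb => hb.2) a).trans h₁)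
  have hd₂ : dist (p a) (-u) ≤ 1 + ‖α‖ := (edist_le_ofReal (by positivity)).1
    ((hp₁.edist_le_infEDist_of_mapsTo (fun b hb => hb.2) a).trans h₂)
  rw [dist_eq_norm] at hd₁
  rw [dist_eq_norm, sub_neg_eq_add] at hd₂
  rw [eq_smul_of_norm_sub_le_of_norm_add_le hu hd₁ hd₂, RCLike.real_smul_eq_coe_mul,
    mul_div_cancel₀ α hα]

/-- For a norm-one functional `p` and a scalar `α` with `0 < |α| ≤ 1`,
the set `M_{p,α}` (defined with distances to the faces `F_{p,±α/|α|}`, using the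
extended distance so that the distance to the empty set is `∞`) is contained in
`{a ∈ S(B) : p a = α}`. -/
theorem stmt3 {𝕜 : Type*} [RCLike 𝕜] {B : Type*} [NormedAddCommGroup B]
    [NormedSpace 𝕜 B] [CompleteSpace B]
    (p : StrongDual 𝕜 B) (hp : ‖p‖ = 1)
    (α : 𝕜) (hα₁ : ‖α‖ ≤ 1) (hα₀ : α ≠ 0) :
    {a : B | ‖a‖ = 1 ∧
        EMetric.infEdist a {b : B | ‖b‖ = 1 ∧ p b = α / (‖α‖ : 𝕜)} ≤
          ENNReal.ofReal (1 - ‖α‖) ∧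
        EMetric.infEdist a {b : B | ‖b‖ = 1 ∧ p b = -(α / (‖α‖ : 𝕜))} ≤
          ENNReal.ofReal (1 + ‖α‖)} ⊆
      {a : B | ‖a‖ = 1 ∧ p a = α} :=
  stmt3_general p hp α hα₁ hα₀
end

section
/- Let B be a real or complex Banach space. For every maximal convex subset F of the unit sphere S(B), there exists an extreme point p of the closed unit ball of the dual space B* such that F = p⁻¹(1) ∩ S(B). -/
/-!
Separating `F` from the open unit ball (Hahn–Banach) gives a functional of norm at most one that
equals `1` on `F`, so the face `Φ = {q ∈ closedBall 0 1 | q = 1 on F}` of the dual unit ball is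
nonempty. It is weak-* compact (Banach–Alaoglu), hence has an extreme point (Krein–Milman), and
that point is extreme in the whole dual ball because `Φ` is a face: `1` is an extreme point of the
unit disc of `𝕜`. For such a `p`, the set `p⁻¹(1) ∩ S(B)` is convex and contains `F`, so it equals
`F` by maximality.
-/

open RCLike Metric Set

theorem RCLike.eq_one_of_norm_le_one_of_re_eq_one {𝕜 : Type*} [RCLike 𝕜] {z : 𝕜}
    (hz : ‖z‖ ≤ 1) (hre : re z = 1) : z = 1 := by
  have hnorm : ‖z‖ = 1 := le_antisymm hz (hre ▸ re_le_norm z)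
  rw [norm_le_re_iff_eq_norm.1 (hre ▸ hz : ‖z‖ ≤ re z), hnorm, ofReal_one]

theorem RCLike.one_mem_extremePoints_closedBall {𝕜 : Type*} [RCLike 𝕜] :
    (1 : 𝕜) ∈ extremePoints ℝ (closedBall (0 : 𝕜) 1) :=
  StrictConvexSpace.sphere_subset_extremePoints_closedBall 0 one_ne_zero (by simp)

theorem Convex.exists_real_strongDual_norm_le_one_apply_eq_one {E : Type*}
    [NormedAddCommGroup E] [NormedSpace ℝ E] {F : Set E} (hFc : Convex ℝ F)
    (hFs : F ⊆ sphere 0 1) : ∃ g : StrongDual ℝ E, ‖g‖ ≤ 1 ∧ ∀ b ∈ F, g b = 1 := by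
  obtain ⟨f, s, hf_ball, hf_F⟩ :=
    geometric_hahn_banach_open (convex_ball (0 : E) 1) isOpen_ball hFc <| disjoint_left.2
      fun a ha haF ↦ (mem_ball_zero_iff.1 ha).ne (mem_sphere_zero_iff_norm.1 (hFs haF))
  have hs : 0 < s := by simpa using hf_ball 0 (mem_ball_self one_pos)
  have hf_closedBall : closedBall (0 : E) 1 ⊆ {x | f x ≤ s} := by
    rw [← closure_ball (0 : E) one_ne_zero]
    exact closure_minimal (fun x hx ↦ (hf_ball x hx).le)
      (isClosed_le f.continuous continuous_const)
  have hf_norm : ‖f‖ ≤ s := by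
    refine f.opNorm_le_of_unit_norm hs.le fun x hx ↦ abs_le.2 ⟨?_, hf_closedBall (by simp [hx])⟩
    have h_neg := hf_closedBall (a := -x) (by simp [hx])
    simp only [mem_ofPred_eq, map_neg] at h_neg
    linarith
  refine ⟨s⁻¹ • f, ?_, fun b hb ↦ ?_⟩
  · rw [norm_smul, norm_inv, Real.norm_of_nonneg hs.le]
    exact inv_mul_le_one_of_le₀ hf_norm hs.le
  · have hfb : f b ≤ s := hf_closedBall (sphere_subset_closedBall (hFs hb))
    simp [le_antisymm hfb (hf_F b hb), hs.ne']

section Dual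

variable {𝕜 E : Type*} [RCLike 𝕜] [NormedAddCommGroup E] [NormedSpace 𝕜 E]

theorem StrongDual.norm_apply_le_one {p : StrongDual 𝕜 E} (hp : ‖p‖ ≤ 1) {x : E}
    (hx : ‖x‖ ≤ 1) : ‖p x‖ ≤ 1 :=
  (p.unit_le_opNorm x hx).trans hp

theorem StrongDual.one_le_norm_of_apply_eq_one {p : StrongDual 𝕜 E} (hp : ‖p‖ ≤ 1) {x : E}
    (hx : p x = 1) : 1 ≤ ‖x‖ := by
  simpa [hx] using p.le_of_opNorm_le hp x

theorem isExtreme_closedBall_setOf_forall_apply_eq_one {F : Set E} (hF : F ⊆ closedBall 0 1) :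
    IsExtreme ℝ (closedBall (0 : StrongDual 𝕜 E) 1)
      {q ∈ closedBall 0 1 | ∀ b ∈ F, q b = 1} := by
  refine ⟨sep_subset _ _, fun q₁ hq₁ q₂ hq₂ q ⟨_, hq⟩ hseg ↦ ⟨hq₁, fun b hb ↦ ?_⟩⟩
  have hball {r : StrongDual 𝕜 E} (hr : r ∈ closedBall 0 1) : r b ∈ closedBall (0 : 𝕜) 1 := by
    simpa using StrongDual.norm_apply_le_one (by simpa using hr) (by simpa using hF hb)
  have hsegb : (1 : 𝕜) ∈ openSegment ℝ (q₁ b) (q₂ b) := by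
    obtain ⟨s, t, hs, ht, hst, rfl⟩ := hseg
    exact ⟨s, t, hs, ht, hst, by simpa using hq b hb⟩
  exact ((mem_extremePoints.1 RCLike.one_mem_extremePoints_closedBall).2
    _ (hball hq₁) _ (hball hq₂) hsegb).1

theorem exists_mem_extremePoints_closedBall_forall_apply_eq_one {F : Set E}
    (hF : F ⊆ closedBall 0 1) {p₀ : StrongDual 𝕜 E} (hp₀ : p₀ ∈ closedBall 0 1)
    (hp₀F : ∀ b ∈ F, p₀ b = 1) :
    ∃ p ∈ extremePoints ℝ (closedBall (0 : StrongDual 𝕜 E) 1), ∀ b ∈ F, p b = 1 := by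
  set Φ : Set (StrongDual 𝕜 E) := {q ∈ closedBall 0 1 | ∀ b ∈ F, q b = 1}
  have hΦ : IsCompact (WeakDual.toStrongDual ⁻¹' Φ) := by
    refine (WeakDual.isCompact_closedBall 0 1).inter_right ?_
    show IsClosed {q : WeakDual 𝕜 E | ∀ b ∈ F, q b = 1}
    simp only [ofPred_forall]
    exact isClosed_biInter fun b _ ↦ isClosed_eq (WeakDual.eval_continuous b) continuous_const
  have : LocallyConvexSpace ℝ (WeakDual 𝕜 E) := WeakBilin.locallyConvexSpace
  obtain ⟨q, hq⟩ := hΦ.extremePoints_nonempty ⟨StrongDual.toWeakDual p₀, hp₀, hp₀F⟩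
  exact ⟨q, (isExtreme_closedBall_setOf_forall_apply_eq_one hF).extremePoints_subset_extremePoints
    hq, hq.1.2⟩

variable [NormedSpace ℝ E] [IsScalarTower ℝ 𝕜 E]

theorem Convex.exists_strongDual_norm_le_one_apply_eq_one {F : Set E} (hFc : Convex ℝ F)
    (hFs : F ⊆ sphere 0 1) : ∃ p : StrongDual 𝕜 E, ‖p‖ ≤ 1 ∧ ∀ b ∈ F, p b = 1 := by
  obtain ⟨g, hg, hgF⟩ := hFc.exists_real_strongDual_norm_le_one_apply_eq_one hFs
  have hp : ‖(g.extendRCLike : StrongDual 𝕜 E)‖ ≤ 1 :=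
    (StrongDual.norm_extendRCLike g).le.trans hg
  refine ⟨g.extendRCLike, hp, fun b hb ↦ RCLike.eq_one_of_norm_le_one_of_re_eq_one ?_ ?_⟩
  · exact StrongDual.norm_apply_le_one hp (mem_sphere_zero_iff_norm.1 (hFs hb)).le
  · simp [hgF b hb]

theorem convex_setOf_apply_eq_one_inter_sphere {p : StrongDual 𝕜 E} (hp : ‖p‖ ≤ 1) :
    Convex ℝ ({a | p a = 1} ∩ sphere (0 : E) 1) := by
  have h : {a | p a = 1} ∩ sphere (0 : E) 1 =
      (p.restrictScalars ℝ) ⁻¹' {1} ∩ closedBall 0 1 := by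
    ext a
    simp only [mem_inter_iff, mem_ofPred_eq, mem_preimage, mem_singleton_iff,
      ContinuousLinearMap.coe_restrictScalars', mem_sphere_zero_iff_norm, mem_closedBall_zero_iff]
    exact and_congr_right fun ha ↦
      ⟨le_of_eq, fun h ↦ le_antisymm h (StrongDual.one_le_norm_of_apply_eq_one hp ha)⟩
  rw [h]
  exact ((convex_singleton 1).linear_preimage (p.restrictScalars ℝ).toLinearMap).inter
    (convex_closedBall 0 1)

end Dual

theorem stmt6_general {𝕜 : Type*} [RCLike 𝕜] {B : Type*} [NormedAddCommGroup B]
    [NormedSpace 𝕜 B] [NormedSpace ℝ B] [IsScalarTower ℝ 𝕜 B]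
    (F : Set B)
    (hF : Convex ℝ F ∧ F ⊆ {a : B | ‖a‖ = 1} ∧
      ∀ G : Set B, Convex ℝ G → G ⊆ {a : B | ‖a‖ = 1} → F ⊆ G → G = F) :
    ∃ p ∈ Set.extremePoints ℝ (Metric.closedBall (0 : StrongDual 𝕜 B) 1),
      F = {a : B | p a = 1} ∩ {a : B | ‖a‖ = 1} := by
  have hS : {a : B | ‖a‖ = 1} = sphere 0 1 := by ext; simp
  rw [hS] at hF ⊢
  obtain ⟨hFc, hFs, hFmax⟩ := hF
  obtain ⟨p₀, hp₀, hp₀F⟩ := hFc.exists_strongDual_norm_le_one_apply_eq_one (𝕜 := 𝕜) hFs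
  obtain ⟨p, hp, hpF⟩ := exists_mem_extremePoints_closedBall_forall_apply_eq_one
    (hFs.trans sphere_subset_closedBall) (mem_closedBall_zero_iff.2 hp₀) hp₀F
  have hp_norm : ‖p‖ ≤ 1 := mem_closedBall_zero_iff.1 (extremePoints_subset hp)
  exact ⟨p, hp, (hFmax _ (convex_setOf_apply_eq_one_inter_sphere hp_norm) inter_subset_right
    fun b hb ↦ ⟨hpF b hb, hFs hb⟩).symm⟩

/-- Every maximal convex subset `F` of the unit sphere of a (real or
complex) Banach space is of the form `p⁻¹(1) ∩ S(B)` for some extreme point `p`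
of the closed unit ball of the dual space. -/
theorem stmt6 {𝕜 : Type*} [RCLike 𝕜] {B : Type*} [NormedAddCommGroup B]
    [NormedSpace 𝕜 B] [NormedSpace ℝ B] [IsScalarTower ℝ 𝕜 B] [CompleteSpace B]
    (F : Set B)
    (hF : Convex ℝ F ∧ F ⊆ {a : B | ‖a‖ = 1} ∧
      ∀ G : Set B, Convex ℝ G → G ⊆ {a : B | ‖a‖ = 1} → F ⊆ G → G = F) :
    ∃ p ∈ Set.extremePoints ℝ (Metric.closedBall (0 : StrongDual 𝕜 B) 1),
      F = {a : B | p a = 1} ∩ {a : B | ‖a‖ = 1} :=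
  stmt6_general F hF
end

section
/- Let B₁, B₂ be complex Banach spaces, each satisfying the condition of the Hausdorff distance, and let T : S(B₁) → S(B₂) be a surjective isometry. Let P₁, P₂ be sets of representatives for the maximal convex subsets of S(B₁), S(B₂) respectively, and let φ : P₁ × 𝕋 → P₂ and τ : P₁ × 𝕋 → 𝕋 be the maps determined by T(F_{p,λ}) = F_{φ(p,λ), τ(p,λ)}. Then φ(p, λ) = φ(p, λ') for all p ∈ P₁ and λ, λ' ∈ 𝕋. -/
/-! A map that is isometric on the unit spheres preserves Hausdorff distances between faces.
If `φ(p,λ) ≠ φ(p,λ')`, the image faces lie at Hausdorff distance `2`, whereas the faces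
themselves lie at distance `|λ - λ'|`; hence `φ(p,·)` agrees on any `λ, λ'` with
`|λ - λ'| < 2`. Antipodal points `λ, -λ` are then linked through `iλ`. -/

/-- A maximal convex subset of the unit sphere of `B`. -/
def IsMaximalConvexSubset {B : Type*} [NormedAddCommGroup B] [Module ℝ B] (F : Set B) : Prop :=
  Convex ℝ F ∧ F ⊆ {a : B | ‖a‖ = 1} ∧
    ∀ G : Set B, Convex ℝ G → G ⊆ {a : B | ‖a‖ = 1} → F ⊆ G → G = F

/-- The face `F_{p,λ} = {a ∈ S(B) : p(a) = λ}`. -/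
def faceSet {B : Type*} [NormedAddCommGroup B] [NormedSpace ℂ B]
    (p : StrongDual ℂ B) (lam : ℂ) : Set B :=
  {a : B | ‖a‖ = 1 ∧ p a = lam}

/-- `P` is a set of representatives for the maximal convex subsets of the sphere of `B`:
every maximal convex subset is `F_{p,λ}` for a unique `(p,λ) ∈ P × 𝕋`, and every such
`F_{p,λ}` is maximal convex. -/
def IsRepresentativeSet {B : Type*} [NormedAddCommGroup B] [NormedSpace ℂ B]
    (P : Set (StrongDual ℂ B)) : Prop :=
  (∀ F : Set B, IsMaximalConvexSubset F → ∃ p ∈ P, ∃ lam : ℂ, ‖lam‖ = 1 ∧ F = faceSet p lam) ∧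
  (∀ p ∈ P, ∀ lam : ℂ, ‖lam‖ = 1 → IsMaximalConvexSubset (faceSet p lam)) ∧
  (∀ p ∈ P, ∀ p' ∈ P, ∀ lam lam' : ℂ, ‖lam‖ = 1 → ‖lam'‖ = 1 →
    faceSet p lam = faceSet p' lam' → p = p' ∧ lam = lam')

/-- `B` (with representatives `P`) satisfies the condition of the Hausdorff distance. -/
def HausdorffCondition {B : Type*} [NormedAddCommGroup B] [NormedSpace ℂ B]
    (P : Set (StrongDual ℂ B)) : Prop :=
  (∀ p ∈ P, ∀ lam lam' : ℂ, ‖lam‖ = 1 → ‖lam'‖ = 1 →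
    Metric.hausdorffDist (faceSet p lam) (faceSet p lam') = ‖lam - lam'‖) ∧
  (∀ p ∈ P, ∀ p' ∈ P, p ≠ p' → ∀ lam lam' : ℂ, ‖lam‖ = 1 → ‖lam'‖ = 1 →
    Metric.hausdorffDist (faceSet p lam) (faceSet p' lam') = 2)

theorem Metric.hausdorffDist_image_of_dist_eq_on {α β : Type*}
    [PseudoMetricSpace α] [PseudoMetricSpace β] {f : α → β} {u s t : Set α}
    (hf : ∀ x ∈ u, ∀ y ∈ u, dist (f x) (f y) = dist x y)
    (hs : s ⊆ u) (ht : t ⊆ u) :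
    hausdorffDist (f '' s) (f '' t) = hausdorffDist s t := by
  have hg : Isometry (f ∘ ((↑) : u → α)) :=
    Isometry.of_dist_eq fun x y => hf x x.2 y y.2
  have himage : ∀ v ⊆ u, f '' v = (f ∘ ((↑) : u → α)) '' ((↑) ⁻¹' v) := fun v hv => by
    rw [Set.image_comp, Subtype.image_preimage_coe, Set.inter_eq_right.2 hv]
  have hval : ∀ v ⊆ u, v = ((↑) : u → α) '' ((↑) ⁻¹' v) := fun v hv => by
    rw [Subtype.image_preimage_coe, Set.inter_eq_right.2 hv]
  rw [himage s hs, himage t ht, hausdorffDist_image hg, hval s hs, hval t ht,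
    hausdorffDist_image isometry_subtype_coe, ← hval s hs, ← hval t ht]

theorem eq_neg_of_norm_sub_eq_add {E : Type*} [NormedAddCommGroup E] [NormedSpace ℝ E]
    [StrictConvexSpace ℝ E] {x y : E} (hxy : ‖x‖ = ‖y‖) (h : ‖x - y‖ = ‖x‖ + ‖y‖) : y = -x := by
  have hray : SameRay ℝ x (-y) := by
    rwa [sameRay_iff_norm_add, ← sub_eq_add_neg, norm_neg]
  rw [hray.eq_of_norm_eq (by rwa [norm_neg]), neg_neg]

theorem Complex.exists_norm_eq_one_norm_sub_ne_two {z w : ℂ} (hz : ‖z‖ = 1) (hw : ‖w‖ = 1) :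
    ∃ μ : ℂ, ‖μ‖ = 1 ∧ ‖z - μ‖ ≠ 2 ∧ ‖μ - w‖ ≠ 2 := by
  by_cases hzw : ‖z - w‖ = 2
  · have hw' : w = -z :=
      eq_neg_of_norm_sub_eq_add (hz.trans hw.symm) (by rw [hz, hw, hzw]; norm_num)
    have hsqrt : ‖1 - I‖ ≠ 2 ∧ ‖I + 1‖ ≠ 2 := by
      simp only [Complex.norm_def, Complex.normSq_apply]
      norm_num
    refine ⟨I * z, by rw [norm_mul, norm_I, hz, one_mul], ?_, ?_⟩
    · rw [show z - I * z = (1 - I) * z by ring, norm_mul, hz, mul_one]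
      exact hsqrt.1
    · rw [hw', show I * z - -z = (I + 1) * z by ring, norm_mul, hz, mul_one]
      exact hsqrt.2
  · exact ⟨z, hz, by simp, hzw⟩

theorem HausdorffCondition.eq_of_image_faceSet_eq {B₁ B₂ : Type*}
    [NormedAddCommGroup B₁] [NormedSpace ℂ B₁] [NormedAddCommGroup B₂] [NormedSpace ℂ B₂]
    {P₁ : Set (StrongDual ℂ B₁)} {P₂ : Set (StrongDual ℂ B₂)}
    (hH₁ : HausdorffCondition P₁) (hH₂ : HausdorffCondition P₂) {T : B₁ → B₂}
    (hiso : ∀ a b : B₁, ‖a‖ = 1 → ‖b‖ = 1 → ‖T a - T b‖ = ‖a - b‖)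
    {p : StrongDual ℂ B₁} (hp : p ∈ P₁) {lam lam' : ℂ} (hl : ‖lam‖ = 1) (hl' : ‖lam'‖ = 1)
    {q q' : StrongDual ℂ B₂} (hq : q ∈ P₂) (hq' : q' ∈ P₂) {μ μ' : ℂ} (hμ : ‖μ‖ = 1)
    (hμ' : ‖μ'‖ = 1) (himg : T '' faceSet p lam = faceSet q μ)
    (himg' : T '' faceSet p lam' = faceSet q' μ') (hne : ‖lam - lam'‖ ≠ 2) :
    q = q' := by
  by_contra hqq'
  have hdist : Metric.hausdorffDist (T '' faceSet p lam) (T '' faceSet p lam') =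
      Metric.hausdorffDist (faceSet p lam) (faceSet p lam') :=
    Metric.hausdorffDist_image_of_dist_eq_on (u := {a : B₁ | ‖a‖ = 1})
      (fun a ha b hb => by rw [dist_eq_norm, dist_eq_norm, hiso a b ha hb])
      (fun a ha => ha.1) (fun a ha => ha.1)
  rw [himg, himg', hH₂.2 q hq q' hq' hqq' μ μ' hμ hμ', hH₁.1 p hp lam lam' hl hl'] at hdist
  exact hne hdist.symm

theorem stmt8_general {B₁ B₂ : Type*} [NormedAddCommGroup B₁] [NormedSpace ℂ B₁]
    [NormedAddCommGroup B₂] [NormedSpace ℂ B₂]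
    (P₁ : Set (StrongDual ℂ B₁)) (P₂ : Set (StrongDual ℂ B₂))
    (hH₁ : HausdorffCondition P₁) (hH₂ : HausdorffCondition P₂)
    (T : B₁ → B₂)
    (hiso : ∀ a b : B₁, ‖a‖ = 1 → ‖b‖ = 1 → ‖T a - T b‖ = ‖a - b‖)
    (φ : StrongDual ℂ B₁ → ℂ → StrongDual ℂ B₂)
    (τ : StrongDual ℂ B₁ → ℂ → ℂ)
    (hφτ : ∀ p ∈ P₁, ∀ lam : ℂ, ‖lam‖ = 1 →
      φ p lam ∈ P₂ ∧ ‖τ p lam‖ = 1 ∧ T '' faceSet p lam = faceSet (φ p lam) (τ p lam)) :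
    ∀ p ∈ P₁, ∀ lam lam' : ℂ, ‖lam‖ = 1 → ‖lam'‖ = 1 → φ p lam = φ p lam' := by
  have step : ∀ p ∈ P₁, ∀ lam lam' : ℂ, ‖lam‖ = 1 → ‖lam'‖ = 1 → ‖lam - lam'‖ ≠ 2 →
      φ p lam = φ p lam' := by
    intro p hp lam lam' hl hl' hne
    obtain ⟨hq, hμ, himg⟩ := hφτ p hp lam hl
    obtain ⟨hq', hμ', himg'⟩ := hφτ p hp lam' hl'
    exact hH₁.eq_of_image_faceSet_eq hH₂ hiso hp hl hl' hq hq' hμ hμ' himg himg' hne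
  intro p hp lam lam' hl hl'
  obtain ⟨μ, hμ, hlμ, hμl'⟩ := Complex.exists_norm_eq_one_norm_sub_ne_two hl hl'
  exact (step p hp lam μ hl hμ hlμ).trans (step p hp μ lam' hμ hl' hμl')

/-- If `B₁, B₂` satisfy the condition of the Hausdorff distance and
`T` is a surjective isometry between their unit spheres inducing `φ, τ` via
`T(F_{p,λ}) = F_{φ(p,λ), τ(p,λ)}`, then `φ(p,λ)` does not depend on `λ`. -/
theorem stmt8 {B₁ B₂ : Type*} [NormedAddCommGroup B₁] [NormedSpace ℂ B₁] [CompleteSpace B₁]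
    [NormedAddCommGroup B₂] [NormedSpace ℂ B₂] [CompleteSpace B₂]
    (P₁ : Set (StrongDual ℂ B₁)) (P₂ : Set (StrongDual ℂ B₂))
    (hP₁ : IsRepresentativeSet P₁) (hP₂ : IsRepresentativeSet P₂)
    (hH₁ : HausdorffCondition P₁) (hH₂ : HausdorffCondition P₂)
    (T : B₁ → B₂)
    (hmap : ∀ a : B₁, ‖a‖ = 1 → ‖T a‖ = 1)
    (hsurj : ∀ b : B₂, ‖b‖ = 1 → ∃ a : B₁, ‖a‖ = 1 ∧ T a = b)
    (hiso : ∀ a b : B₁, ‖a‖ = 1 → ‖b‖ = 1 → ‖T a - T b‖ = ‖a - b‖)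
    (φ : StrongDual ℂ B₁ → ℂ → StrongDual ℂ B₂)
    (τ : StrongDual ℂ B₁ → ℂ → ℂ)
    (hφτ : ∀ p ∈ P₁, ∀ lam : ℂ, ‖lam‖ = 1 →
      φ p lam ∈ P₂ ∧ ‖τ p lam‖ = 1 ∧ T '' faceSet p lam = faceSet (φ p lam) (τ p lam)) :
    ∀ p ∈ P₁, ∀ lam lam' : ℂ, ‖lam‖ = 1 → ‖lam'‖ = 1 → φ p lam = φ p lam' :=
  stmt8_general P₁ P₂ hH₁ hH₂ T hiso φ τ hφτ
end

section
/- With the hypotheses of the previous setting (B₁, B₂ complex Banach spaces satisfying the condition of the Hausdorff distance, T a surjective isometry of their unit spheres inducing maps φ and τ), for each p ∈ P₁ either τ(p, λ) = λ·τ(p,1) for all λ ∈ 𝕋, or τ(p, λ) = conj(λ)·τ(p,1) for all λ ∈ 𝕋. -/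
open ComplexConjugate

theorem Metric.hausdorffDist_image_of_dist_eq {α β : Type*} [PseudoMetricSpace α]
    [PseudoMetricSpace β] {f : α → β} {S s t : Set α}
    (hf : ∀ a ∈ S, ∀ b ∈ S, dist (f a) (f b) = dist a b) (hs : s ⊆ S) (ht : t ⊆ S) :
    hausdorffDist (f '' s) (f '' t) = hausdorffDist s t := by
  have hrestrict : Isometry (S.domRestrict f) :=
    Isometry.of_dist_eq fun a b => hf a a.2 b b.2
  have hval : ∀ u ⊆ S, ((↑) : S → α) '' (((↑) : S → α) ⁻¹' u) = u := fun u hu =>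
    Set.image_preimage_eq_of_subset (by rwa [Subtype.range_coe])
  rw [← hval s hs, ← hval t ht, Set.image_image, Set.image_image]
  exact (hausdorffDist_image hrestrict).trans (hausdorffDist_image isometry_subtype_coe).symm

namespace Complex

theorem re_mul_conj_eq_of_norm_sub_eq {z w z' w' : ℂ} (hz : ‖z‖ = ‖z'‖) (hw : ‖w‖ = ‖w'‖)
    (h : ‖z - w‖ = ‖z' - w'‖) : (z * conj w).re = (z' * conj w').re := by
  have hsq : normSq (z - w) = normSq (z' - w') := by
    rw [normSq_eq_norm_sq, normSq_eq_norm_sq, h]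
  rw [normSq_sub, normSq_sub, normSq_eq_norm_sq z, normSq_eq_norm_sq w,
    normSq_eq_norm_sq z', normSq_eq_norm_sq w', hz, hw] at hsq
  linarith

theorem eq_or_eq_conj_of_norm_eq_of_re_eq {z w : ℂ} (hn : ‖z‖ = ‖w‖) (hre : z.re = w.re) :
    z = w ∨ z = conj w := by
  have him : z.im ^ 2 = w.im ^ 2 := by
    have hsq : normSq z = normSq w := by rw [normSq_eq_norm_sq, normSq_eq_norm_sq, hn]
    rw [normSq_apply, normSq_apply, hre] at hsq
    nlinarith
  rcases sq_eq_sq_iff_eq_or_eq_neg.1 him with h | h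
  · exact Or.inl (ext hre h)
  · exact Or.inr (ext (by rw [conj_re, hre]) (by rw [conj_im, h]))

section CircleIsometry

variable {g : ℂ → ℂ}

theorem eq_mul_or_eq_conj_mul_of_norm_sub_eq (hg : ∀ z, ‖z‖ = 1 → ‖g z‖ = 1)
    (hdist : ∀ z w, ‖z‖ = 1 → ‖w‖ = 1 → ‖g z - g w‖ = ‖z - w‖) {z : ℂ} (hz : ‖z‖ = 1) :
    g z = z * g 1 ∨ g z = conj z * g 1 := by
  have hg1 := hg 1 norm_one
  have hre : (g z * conj (g 1)).re = (z * conj 1).re :=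
    re_mul_conj_eq_of_norm_sub_eq ((hg z hz).trans hz.symm) (hg1.trans norm_one.symm)
      (hdist z 1 hz norm_one)
  have hnorm : ‖g z * conj (g 1)‖ = ‖z‖ := by
    rw [norm_mul, RCLike.norm_conj, hg z hz, hg1, hz, one_mul]
  have hunit : conj (g 1) * g 1 = 1 := by
    rw [conj_mul', hg1]
    norm_num
  have hfactor : g z = g z * conj (g 1) * g 1 := by rw [mul_assoc, hunit, mul_one]
  rw [map_one, mul_one] at hre
  rcases eq_or_eq_conj_of_norm_eq_of_re_eq hnorm hre with h | h <;> rw [hfactor, h] <;> simp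

theorem forall_eq_mul_or_forall_eq_conj_mul (hg : ∀ z, ‖z‖ = 1 → ‖g z‖ = 1)
    (hdist : ∀ z w, ‖z‖ = 1 → ‖w‖ = 1 → ‖g z - g w‖ = ‖z - w‖) :
    (∀ z, ‖z‖ = 1 → g z = z * g 1) ∨ (∀ z, ‖z‖ = 1 → g z = conj z * g 1) := by
  refine or_iff_not_imp_left.2 fun hrot z hz => ?_
  push Not at hrot
  obtain ⟨μ, hμ, hμrot⟩ := hrot
  have hμconj : g μ = conj μ * g 1 :=
    (eq_mul_or_eq_conj_mul_of_norm_sub_eq hg hdist hμ).resolve_left hμrot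
  have hμim : μ.im ≠ 0 := fun h => hμrot (by rwa [conj_eq_iff_im.2 h] at hμconj)
  refine (eq_mul_or_eq_conj_mul_of_norm_sub_eq hg hdist hz).elim (fun hzrot => ?_) id
  have hunit : g 1 * conj (g 1) = 1 := by
    rw [mul_conj', hg 1 norm_one]
    norm_num
  have hre : (z * μ).re = (z * conj μ).re := by
    have h := re_mul_conj_eq_of_norm_sub_eq ((hg z hz).trans hz.symm)
      ((hg μ hμ).trans hμ.symm) (hdist z μ hz hμ)
    rwa [hzrot, hμconj, map_mul, conj_conj,
      show z * g 1 * (μ * conj (g 1)) = z * μ * (g 1 * conj (g 1)) by ring, hunit,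
      mul_one] at h
  have hzim : z.im = 0 := by
    simp only [mul_re, conj_re, conj_im] at hre
    exact (mul_eq_zero.1 (by linarith : z.im * μ.im = 0)).resolve_right hμim
  rwa [conj_eq_iff_im.2 hzim]

end CircleIsometry

end Complex

theorem stmt9_general {B₁ B₂ : Type*} [NormedAddCommGroup B₁] [NormedSpace ℂ B₁]
    [NormedAddCommGroup B₂] [NormedSpace ℂ B₂]
    (P₁ : Set (StrongDual ℂ B₁)) (P₂ : Set (StrongDual ℂ B₂))
    (hH₁ : HausdorffCondition P₁) (hH₂ : HausdorffCondition P₂)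
    (T : B₁ → B₂)
    (hiso : ∀ a b : B₁, ‖a‖ = 1 → ‖b‖ = 1 → ‖T a - T b‖ = ‖a - b‖)
    (φ : StrongDual ℂ B₁ → StrongDual ℂ B₂)
    (τ : StrongDual ℂ B₁ → ℂ → ℂ)
    (hφτ : ∀ p ∈ P₁, ∀ lam : ℂ, ‖lam‖ = 1 →
      φ p ∈ P₂ ∧ ‖τ p lam‖ = 1 ∧ T '' faceSet p lam = faceSet (φ p) (τ p lam)) :
    ∀ p ∈ P₁,
      (∀ lam : ℂ, ‖lam‖ = 1 → τ p lam = lam * τ p 1) ∨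
      (∀ lam : ℂ, ‖lam‖ = 1 → τ p lam = (starRingEnd ℂ) lam * τ p 1) := by
  intro p hp
  refine Complex.forall_eq_mul_or_forall_eq_conj_mul (fun lam hlam => (hφτ p hp lam hlam).2.1)
    fun lam lam' hlam hlam' => ?_
  obtain ⟨hφp, hτ, himage⟩ := hφτ p hp lam hlam
  obtain ⟨-, hτ', himage'⟩ := hφτ p hp lam' hlam'
  have hT : ∀ a ∈ {a : B₁ | ‖a‖ = 1}, ∀ b ∈ {a : B₁ | ‖a‖ = 1}, dist (T a) (T b) = dist a b :=
    fun a ha b hb => by rw [dist_eq_norm, dist_eq_norm, hiso a b ha hb]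
  have hsphere : ∀ μ, faceSet p μ ⊆ {a : B₁ | ‖a‖ = 1} := fun μ a ha => ha.1
  rw [← hH₂.1 (φ p) hφp _ _ hτ hτ', ← himage, ← himage',
    Metric.hausdorffDist_image_of_dist_eq hT (hsphere lam) (hsphere lam'),
    hH₁.1 p hp lam lam' hlam hlam']

/-- Under the same setting (with `φ(p)` independent of `λ`), for each
`p ∈ P₁` either `τ(p,λ) = λ·τ(p,1)` for all unimodular `λ`, or
`τ(p,λ) = conj(λ)·τ(p,1)` for all unimodular `λ`. -/
theorem stmt9 {B₁ B₂ : Type*} [NormedAddCommGroup B₁] [NormedSpace ℂ B₁] [CompleteSpace B₁]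
    [NormedAddCommGroup B₂] [NormedSpace ℂ B₂] [CompleteSpace B₂]
    (P₁ : Set (StrongDual ℂ B₁)) (P₂ : Set (StrongDual ℂ B₂))
    (hP₁ : IsRepresentativeSet P₁) (hP₂ : IsRepresentativeSet P₂)
    (hH₁ : HausdorffCondition P₁) (hH₂ : HausdorffCondition P₂)
    (T : B₁ → B₂)
    (hmap : ∀ a : B₁, ‖a‖ = 1 → ‖T a‖ = 1)
    (hsurj : ∀ b : B₂, ‖b‖ = 1 → ∃ a : B₁, ‖a‖ = 1 ∧ T a = b)
    (hiso : ∀ a b : B₁, ‖a‖ = 1 → ‖b‖ = 1 → ‖T a - T b‖ = ‖a - b‖)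
    (φ : StrongDual ℂ B₁ → StrongDual ℂ B₂)
    (τ : StrongDual ℂ B₁ → ℂ → ℂ)
    (hφτ : ∀ p ∈ P₁, ∀ lam : ℂ, ‖lam‖ = 1 →
      φ p ∈ P₂ ∧ ‖τ p lam‖ = 1 ∧ T '' faceSet p lam = faceSet (φ p) (τ p lam)) :
    ∀ p ∈ P₁,
      (∀ lam : ℂ, ‖lam‖ = 1 → τ p lam = lam * τ p 1) ∨
      (∀ lam : ℂ, ‖lam‖ = 1 → τ p lam = (starRingEnd ℂ) lam * τ p 1) :=
  stmt9_general P₁ P₂ hH₁ hH₂ T hiso φ τ hφτ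
end

section
/- Let Y be a locally compact Hausdorff space. Then the real Banach space C₀(Y, ℝ) of real-valued continuous functions vanishing at infinity on Y, with the supremum norm, satisfies the Mazur-Ulam property: every surjective isometry from the unit sphere of C₀(Y, ℝ) onto the unit sphere of any real Banach space extends to a surjective real-linear isometry between the whole spaces. -/
open scoped ZeroAtInfty

/-!
Let `σ f` be the unit vector with `T (σ f) = -T f`. Then `‖σ f - f‖ = 2` and
`‖σ f - h‖ = ‖σ h - f‖`, and in `C₀(Y, ℝ)` these conditions alone force `σ f = -f`: testing
against plateau bumps shows that `σ h = -1` wherever `h` is locally `1`, and raising `σ h` to `1`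
near a point `y` then bounds `σ h y ≤ -h y`. Hence `T` is odd.

For `y ∈ Y` and a neighbourhood `V` of `y`, take a bump `p` at `y` inside `V` and a supporting
functional `ψ` of a maximal convex subset of the unit sphere of `E` through `T p`; then
`ψ (T f) ≥ inf_V f` for every unit vector `f`. A weak-* cluster point of these functionals as `V`
shrinks, together with oddness, gives `φ_y` with `φ_y (T f) = f y`. The functionals `φ_y` separate
points of `E`, which makes the positively homogeneous extension of `T` linear.
-/

open Filter Topology Metric Set

namespace ZeroAtInftyContinuousMap

variable {Y : Type*} [TopologicalSpace Y]

section Norm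

variable {β : Type*} [NormedAddCommGroup β]

theorem norm_apply_le (f : C₀(Y, β)) (x : Y) : ‖f x‖ ≤ ‖f‖ :=
  (f.toBCF.norm_coe_le_norm x).trans_eq norm_toBCF_eq_norm

theorem norm_le_iff {f : C₀(Y, β)} {C : ℝ} (hC : 0 ≤ C) : ‖f‖ ≤ C ↔ ∀ x, ‖f x‖ ≤ C := by
  rw [← norm_toBCF_eq_norm]
  exact BoundedContinuousFunction.norm_le hC

theorem exists_norm_apply_eq_norm {f : C₀(Y, β)} (hf : f ≠ 0) : ∃ z, ‖f z‖ = ‖f‖ := by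
  obtain ⟨x₀, hx₀⟩ : ∃ x₀, f x₀ ≠ 0 := by
    by_contra! h
    exact hf (ext h)
  have hsmall : ∀ᶠ x in cocompact Y, ‖f x‖ ≤ ‖f x₀‖ := by
    have := (zero_at_infty f).norm
    rw [norm_zero] at this
    exact this.eventually (ge_mem_nhds (norm_pos_iff.2 hx₀))
  obtain ⟨z, hz⟩ := (map_continuous f).norm.exists_forall_ge' x₀ hsmall
  exact ⟨z, le_antisymm (norm_apply_le f z) ((norm_le_iff (norm_nonneg _)).2 hz)⟩

end Norm

def evalₗ (y : Y) : C₀(Y, ℝ) →ₗ[ℝ] ℝ where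
  toFun f := f y
  map_add' _ _ := rfl
  map_smul' _ _ := rfl

variable {f g p : C₀(Y, ℝ)}

theorem abs_apply_le_norm (f : C₀(Y, ℝ)) (x : Y) : |f x| ≤ ‖f‖ :=
  (Real.norm_eq_abs _).symm.trans_le (norm_apply_le f x)

theorem norm_sub_eq_two_of_abs_apply (hf : ‖f‖ ≤ 1) (hg : ‖g‖ ≤ 1) {z : Y} (hz : |f z - g z| = 2) :
    ‖f - g‖ = 2 :=
  le_antisymm ((norm_sub_le f g).trans (by linarith))
    (hz ▸ by simpa only [sub_apply] using abs_apply_le_norm (f - g) z)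

theorem exists_apply_eq_one_of_norm_add_eq_two (hf : ‖f‖ ≤ 1) (hg₀ : ∀ x, 0 ≤ g x)
    (hg₁ : ∀ x, g x ≤ 1) (h : ‖f + g‖ = 2) : ∃ z, f z = 1 ∧ g z = 1 := by
  have hne : f + g ≠ 0 := by
    rintro h₀
    norm_num [h₀] at h
  obtain ⟨z, hz⟩ := exists_norm_apply_eq_norm hne
  rw [h, add_apply, Real.norm_eq_abs] at hz
  have hfz := abs_le.1 ((abs_apply_le_norm f z).trans hf)
  rcases abs_cases (f z + g z) with ⟨h', -⟩ | ⟨h', -⟩ <;>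
    refine ⟨z, ?_, ?_⟩ <;> linarith [hg₀ z, hg₁ z]

theorem exists_apply_eq_neg_one_of_norm_sub_eq_two (hf : ‖f‖ ≤ 1) (hg₀ : ∀ x, 0 ≤ g x)
    (hg₁ : ∀ x, g x ≤ 1) (h : ‖f - g‖ = 2) : ∃ z, f z = -1 ∧ g z = 1 := by
  obtain ⟨z, hz, hgz⟩ := exists_apply_eq_one_of_norm_add_eq_two (f := -f) (by rwa [norm_neg])
    hg₀ hg₁ (by rwa [neg_add_eq_sub, norm_sub_rev])
  exact ⟨z, by simpa using congrArg Neg.neg hz, hgz⟩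

structure IsPlateauBump (p : C₀(Y, ℝ)) (y : Y) (V : Set Y) : Prop where
  nonneg : ∀ x, 0 ≤ p x
  le_one : ∀ x, p x ≤ 1
  eventually_eq_one : ∀ᶠ x in 𝓝 y, p x = 1
  mem_of_eq_one : ∀ x, p x = 1 → x ∈ V

namespace IsPlateauBump

variable {y : Y} {V : Set Y}

theorem apply_self (hp : IsPlateauBump p y V) : p y = 1 :=
  hp.eventually_eq_one.self_of_nhds

theorem norm_eq_one (hp : IsPlateauBump p y V) : ‖p‖ = 1 := by
  refine le_antisymm ((norm_le_iff zero_le_one).2 fun x => ?_) ?_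
  · rw [Real.norm_eq_abs, abs_le]
    exact ⟨by linarith [hp.nonneg x], hp.le_one x⟩
  · simpa [hp.apply_self] using abs_apply_le_norm p y

theorem exists_eq_one_on_plateau (hp : IsPlateauBump p y V) (hf : ‖f‖ ≤ 1) {m : ℝ}
    (hm : ∀ x ∈ V, m ≤ f x) :
    ∃ g : C₀(Y, ℝ), ‖g‖ = 1 ∧ (∀ x, p x = 1 → g x = 1) ∧ ‖g - f‖ ≤ 1 - m := by
  have hf₁ : ∀ x, -1 ≤ f x ∧ f x ≤ 1 := fun x => abs_le.1 ((abs_apply_le_norm f x).trans hf)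
  have hc : 0 ≤ 1 - m := by linarith [hm y (hp.mem_of_eq_one y hp.apply_self), hf₁ y]
  let g : C₀(Y, ℝ) :=
    ⟨⟨fun x => min ((f + (1 - m) • p) x) 1, by fun_prop⟩, by
      simpa using (zero_at_infty (f + (1 - m) • p)).min (tendsto_const_nhds (x := (1 : ℝ)))⟩
  have hg : ∀ x, g x = min (f x + (1 - m) * p x) 1 := fun _ => rfl
  have hg_plateau : ∀ x, p x = 1 → g x = 1 := fun x hx => by
    rw [hg, hx, min_eq_right]
    linarith [hm x (hp.mem_of_eq_one x hx)]
  have hlow : ∀ x, f x ≤ g x := fun x => by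
    rw [hg]
    exact le_min (by nlinarith [hp.nonneg x]) (hf₁ x).2
  refine ⟨g, le_antisymm ((norm_le_iff zero_le_one).2 fun x => ?_) ?_, hg_plateau,
    (norm_le_iff hc).2 fun x => ?_⟩
  · rw [Real.norm_eq_abs, abs_le]
    exact ⟨by linarith [hlow x, hf₁ x], (hg x).trans_le (min_le_right _ _)⟩
  · simpa [hg_plateau y hp.apply_self] using abs_apply_le_norm g y
  · have hup : g x ≤ f x + (1 - m) * p x := (hg x).trans_le (min_le_left _ _)
    rw [sub_apply, Real.norm_eq_abs, abs_le]
    constructor <;> nlinarith [hlow x, hp.le_one x, hp.nonneg x]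

end IsPlateauBump

theorem exists_isPlateauBump [LocallyCompactSpace Y] [T2Space Y] {y : Y} {V : Set Y}
    (hV : V ∈ 𝓝 y) : ∃ p : C₀(Y, ℝ), IsPlateauBump p y V := by
  obtain ⟨K, hKy, hKV, hK⟩ := local_compact_nhds (interior_mem_nhds.2 hV)
  obtain ⟨q, hqK, hq₀, hq_supp, hq⟩ :=
    exists_continuous_one_zero_of_isCompact hK isOpen_interior.isClosed_compl
      (disjoint_compl_right_iff_subset.2 hKV)
  refine ⟨⟨q, hq_supp.is_zero_at_infty⟩, fun x => (hq x).1, fun x => (hq x).2,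
    Filter.mem_of_superset hKy fun x hx => hqK hx, fun x hx => ?_⟩
  by_contra hxV
  change q x = 1 at hx
  simp [hq₀ fun hx' => hxV (interior_subset hx')] at hx

end ZeroAtInftyContinuousMap

section ConvexSubsetsOfSphere

variable {E : Type*} [NormedAddCommGroup E] [NormedSpace ℝ E]

theorem exists_maximal_convex_subset_sphere {e : E} (he : ‖e‖ = 1) :
    ∃ G, e ∈ G ∧ Maximal (fun C : Set E => Convex ℝ C ∧ C ⊆ sphere 0 1) G := by
  obtain ⟨G, heG, hG⟩ := zorn_subset_nonempty {C : Set E | Convex ℝ C ∧ C ⊆ sphere 0 1}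
    (fun c hc hchain _ => ⟨⋃₀ c, ⟨hchain.directedOn.convex_sUnion fun _ hC => (hc hC).1,
      sUnion_subset fun _ hC => (hc hC).2⟩, fun _ => subset_sUnion_of_mem⟩)
    {e} ⟨convex_singleton e, by simpa using he⟩
  exact ⟨G, heG rfl, hG⟩

theorem Convex.norm_add_eq_two_of_subset_sphere {G : Set E} (hGc : Convex ℝ G)
    (hG : G ⊆ sphere 0 1) {a b : E} (ha : a ∈ G) (hb : b ∈ G) : ‖a + b‖ = 2 := by
  have := hG (hGc ha hb (by norm_num) (by norm_num) (add_halves (1 : ℝ)))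
  rw [mem_sphere_zero_iff_norm, ← smul_add, norm_smul] at this
  norm_num at this
  linarith

theorem norm_eq_one_of_mem_segment {x e z : E} (hx : ‖x‖ ≤ 1) (he : ‖e‖ ≤ 1)
    (hxe : ‖x + e‖ = 2) (hz : z ∈ segment ℝ x e) : ‖z‖ = 1 := by
  obtain ⟨a, b, ha, hb, hab, rfl⟩ := hz
  have hle : ∀ s t : ℝ, 0 ≤ s → 0 ≤ t → s + t = 1 → ‖s • x + t • e‖ ≤ 1 := fun s t hs ht hst =>
    calc ‖s • x + t • e‖ ≤ s * ‖x‖ + t * ‖e‖ := by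
          simpa [norm_smul, abs_of_nonneg hs, abs_of_nonneg ht] using norm_add_le (s • x) (t • e)
      _ ≤ 1 := by nlinarith
  have hsplit : x + e = (a • x + b • e) + (b • x + a • e) := by
    rw [← sub_eq_zero]
    calc x + e - (a • x + b • e + (b • x + a • e)) = (1 - (a + b)) • (x + e) := by module
      _ = 0 := by rw [hab, sub_self, zero_smul]
  refine le_antisymm (hle a b ha hb hab) ?_
  have := hsplit ▸ norm_add_le (a • x + b • e) (b • x + a • e)
  linarith [hle b a hb ha (by linarith)]

theorem Maximal.mem_of_forall_norm_add_eq_two {G : Set E}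
    (hG : Maximal (fun C : Set E => Convex ℝ C ∧ C ⊆ sphere 0 1) G) (hne : G.Nonempty) {x : E}
    (hx : ‖x‖ = 1) (h : ∀ e ∈ G, ‖x + e‖ = 2) : x ∈ G := by
  have hsphere : convexHull ℝ (insert x G) ⊆ sphere 0 1 := by
    rw [convexHull_insert hne, hG.prop.1.convexHull_eq]
    intro z hz
    obtain ⟨x', rfl, e, he, hz⟩ := mem_convexJoin.1 hz
    exact mem_sphere_zero_iff_norm.2 (norm_eq_one_of_mem_segment hx.le
      (mem_sphere_zero_iff_norm.1 (hG.prop.2 he)).le (h e he) hz)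
  rw [hG.eq_of_subset ⟨convex_convexHull ℝ _, hsphere⟩
    ((subset_insert x G).trans (subset_convexHull ℝ _))]
  exact subset_convexHull ℝ _ (mem_insert x G)

theorem exists_norm_le_one_one_le_of_disjoint_ball {G : Set E} (hGc : Convex ℝ G)
    (hG : Disjoint (ball (0 : E) 1) G) : ∃ ψ : StrongDual ℝ E, ‖ψ‖ ≤ 1 ∧ ∀ e ∈ G, 1 ≤ ψ e := by
  obtain ⟨φ, u, hball, hGu⟩ := geometric_hahn_banach_open (convex_ball 0 1) isOpen_ball hGc hG
  have hu : 0 < u := by simpa using hball 0 (mem_ball_self one_pos)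
  have hφ : ‖φ‖ ≤ u := by
    rw [← φ.sSup_unit_ball_eq_norm]
    refine csSup_le ((nonempty_ball.2 one_pos).image _) ?_
    rintro _ ⟨z, hz, rfl⟩
    have hneg := hball (-z) (by simpa using hz)
    rw [map_neg] at hneg
    exact (Real.norm_eq_abs _).trans_le (abs_le.2 ⟨by linarith, (hball z hz).le⟩)
  refine ⟨u⁻¹ • φ, ?_, fun e he => ?_⟩
  · rw [norm_smul, norm_inv, Real.norm_of_nonneg hu.le]
    exact inv_mul_le_one_of_le₀ hφ hu.le
  · rw [smul_apply, smul_eq_mul, le_inv_mul_iff₀ hu, mul_one]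
    exact hGu e he

theorem exists_norm_le_one_forall_le_of_directed {ι : Type*} [Nonempty ι]
    {c : ι → Set (E × ℝ)} (hc : Directed (· ⊆ ·) c)
    (h : ∀ i, ∃ ψ : StrongDual ℝ E, ‖ψ‖ ≤ 1 ∧ ∀ q ∈ c i, q.2 ≤ ψ q.1) :
    ∃ φ : StrongDual ℝ E, ‖φ‖ ≤ 1 ∧ ∀ i, ∀ q ∈ c i, q.2 ≤ φ q.1 := by
  let ball' := WeakDual.toStrongDual ⁻¹' closedBall (0 : StrongDual ℝ E) 1
  let sol : ι → Set (WeakDual ℝ E) := fun i => ⋂ q ∈ c i, {ψ | q.2 ≤ ψ q.1}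
  have hsol : ∀ i, IsClosed (sol i) := fun i =>
    isClosed_biInter fun q _ => isClosed_le continuous_const (WeakDual.eval_continuous q.1)
  obtain ⟨φ, hφ⟩ := IsCompact.nonempty_iInter_of_directed_nonempty_isCompact_isClosed
    (fun i => ball' ∩ sol i)
    (fun i j => (hc i j).imp fun _ hk =>
      ⟨inter_subset_inter_right _ (biInter_subset_biInter_left hk.1),
        inter_subset_inter_right _ (biInter_subset_biInter_left hk.2)⟩)
    (fun i => (h i).imp fun ψ hψ => ⟨mem_closedBall_zero_iff.2 hψ.1, mem_iInter₂.2 hψ.2⟩)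
    (fun i => (WeakDual.isCompact_closedBall 0 1).inter_right (hsol i))
    (fun i => (WeakDual.isClosed_closedBall 0 1).inter (hsol i))
  rw [mem_iInter] at hφ
  exact ⟨WeakDual.toStrongDual φ, mem_closedBall_zero_iff.1 (hφ (Classical.arbitrary ι)).1,
    fun i => mem_iInter₂.1 (hφ i).2⟩

end ConvexSubsetsOfSphere

section SphereMaps

variable {X E : Type*} [NormedAddCommGroup X] [NormedAddCommGroup E]

structure IsSphereAntipode (σ : X → X) : Prop where
  norm_map : ∀ f, ‖f‖ = 1 → ‖σ f‖ = 1
  norm_sub_comm : ∀ f h, ‖f‖ = 1 → ‖h‖ = 1 → ‖σ f - h‖ = ‖σ h - f‖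
  norm_sub_self : ∀ f, ‖f‖ = 1 → ‖σ f - f‖ = 2

theorem IsSphereAntipode.neg_comp_neg {σ : X → X} (hσ : IsSphereAntipode σ) :
    IsSphereAntipode fun f => -σ (-f) where
  norm_map f hf := by rw [norm_neg, hσ.norm_map _ (by rwa [norm_neg])]
  norm_sub_comm f h hf hh := by
    have := hσ.norm_sub_comm (-f) (-h) (by rwa [norm_neg]) (by rwa [norm_neg])
    rwa [sub_neg_eq_add, sub_neg_eq_add, ← norm_neg, neg_add', ← norm_neg (σ (-h) + f),
      neg_add'] at this
  norm_sub_self f hf := by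
    rw [← norm_neg, neg_sub, sub_neg_eq_add, add_comm, ← sub_neg_eq_add,
      hσ.norm_sub_self _ (by rwa [norm_neg])]

structure IsSurjectiveSphereIsometry (T : X → E) : Prop where
  norm_map : ∀ f, ‖f‖ = 1 → ‖T f‖ = 1
  exists_preimage : ∀ e, ‖e‖ = 1 → ∃ f, ‖f‖ = 1 ∧ T f = e
  norm_sub_map : ∀ f g, ‖f‖ = 1 → ‖g‖ = 1 → ‖T f - T g‖ = ‖f - g‖

noncomputable def sphereAntipode (T : X → E) (f : X) : X :=
  Function.invFunOn T {f | ‖f‖ = 1} (-T f)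

namespace IsSurjectiveSphereIsometry

variable {T : X → E} (hT : IsSurjectiveSphereIsometry T)
include hT

theorem sphereAntipode_spec {f : X} (hf : ‖f‖ = 1) :
    ‖sphereAntipode T f‖ = 1 ∧ T (sphereAntipode T f) = -T f := by
  have h := hT.exists_preimage (-T f) (by rw [norm_neg, hT.norm_map f hf])
  exact ⟨Function.invFunOn_mem h, Function.invFunOn_eq h⟩

theorem isSphereAntipode [NormedSpace ℝ E] : IsSphereAntipode (sphereAntipode T) where
  norm_map f hf := (hT.sphereAntipode_spec hf).1
  norm_sub_comm f h hf hh := by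
    rw [← hT.norm_sub_map _ _ (hT.sphereAntipode_spec hf).1 hh,
      ← hT.norm_sub_map _ _ (hT.sphereAntipode_spec hh).1 hf, (hT.sphereAntipode_spec hf).2,
      (hT.sphereAntipode_spec hh).2, sub_eq_add_neg, sub_eq_add_neg, add_comm]
  norm_sub_self f hf := by
    rw [← hT.norm_sub_map _ _ (hT.sphereAntipode_spec hf).1 hf, (hT.sphereAntipode_spec hf).2,
      ← neg_add', norm_neg, ← two_smul ℝ, norm_smul, hT.norm_map f hf]
    norm_num

theorem norm_add_map (hneg : ∀ f, ‖f‖ = 1 → T (-f) = -T f) {f g : X} (hf : ‖f‖ = 1)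
    (hg : ‖g‖ = 1) : ‖T f + T g‖ = ‖f + g‖ := by
  rw [← sub_neg_eq_add, ← hneg g hg, hT.norm_sub_map f (-g) hf (by rwa [norm_neg]),
    sub_neg_eq_add]

end IsSurjectiveSphereIsometry

end SphereMaps

theorem exists_linearIsometryEquiv_extension {X E : Type*} [NormedAddCommGroup X]
    [NormedSpace ℝ X] [NormedAddCommGroup E] [NormedSpace ℝ E] {T : X → E}
    (hmap : ∀ f, ‖f‖ = 1 → ‖T f‖ = 1) (hsurj : ∀ e, ‖e‖ = 1 → ∃ f, ‖f‖ = 1 ∧ T f = e)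
    {ι : Type*} (ℓ : ι → X →ₗ[ℝ] ℝ) (hℓ : ∀ f, (∀ i, ℓ i f = 0) → f = 0)
    (φ : ι → StrongDual ℝ E) (hφ : ∀ i f, ‖f‖ = 1 → φ i (T f) = ℓ i f) :
    ∃ U : X ≃ₗᵢ[ℝ] E, ∀ f, ‖f‖ = 1 → U f = T f := by
  let U : X → E := fun f => ‖f‖ • T (‖f‖⁻¹ • f)
  have hφU : ∀ i f, φ i (U f) = ℓ i f := by
    intro i f
    rcases eq_or_ne f 0 with rfl | hf
    · simp [U]
    · rw [map_smul, hφ i (‖f‖⁻¹ • f) (norm_smul_inv_norm hf), map_smul,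
        smul_inv_smul₀ (norm_ne_zero_iff.2 hf)]
  have hsep : ∀ e e' : E, (∀ i, φ i e = φ i e') → e = e' := by
    intro e e' h
    by_contra hne
    obtain ⟨f, hf, hTf⟩ := hsurj (‖e - e'‖⁻¹ • (e - e')) (norm_smul_inv_norm (sub_ne_zero.2 hne))
    have : f = 0 := hℓ f fun i => by
      rw [← hφ i f hf, hTf, map_smul, map_sub, h i, sub_self, smul_zero]
    simp [this] at hf
  let L : X →ₗ[ℝ] E :=
    { toFun := U
      map_add' := fun f g => hsep _ _ fun i => by simp only [map_add, hφU]
      map_smul' := fun c f => hsep _ _ fun i => by simp only [map_smul, hφU, RingHom.id_apply] }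
  have hL : ∀ f, ‖L f‖ = ‖f‖ := by
    intro f
    rcases eq_or_ne f 0 with rfl | hf
    · simp
    · simp [L, U, norm_smul, hmap (‖f‖⁻¹ • f) (norm_smul_inv_norm hf)]
  refine ⟨LinearIsometryEquiv.ofSurjective ⟨L, hL⟩ fun e => ?_, fun f hf => ?_⟩
  · rcases eq_or_ne e 0 with rfl | he
    · exact ⟨0, map_zero L⟩
    obtain ⟨f, hf, hTf⟩ := hsurj (‖e‖⁻¹ • e) (norm_smul_inv_norm he)
    refine ⟨‖e‖ • f, ?_⟩
    simp [L, U, hf, hTf, smul_inv_smul₀ (norm_ne_zero_iff.2 he)]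
  · change ‖f‖ • T (‖f‖⁻¹ • f) = T f
    rw [hf, inv_one, one_smul, one_smul]

section ZeroAtInfty

open ZeroAtInftyContinuousMap

variable {Y : Type*} [TopologicalSpace Y] [LocallyCompactSpace Y] [T2Space Y]

namespace IsSphereAntipode

variable {σ : C₀(Y, ℝ) → C₀(Y, ℝ)} (hσ : IsSphereAntipode σ) {h : C₀(Y, ℝ)} (hh : ‖h‖ = 1)
include hσ hh

/-- For a plateau bump `p` inside `V ∩ {h = 1}`, both `σ p` and then `σ h` must reach `-1` on the
plateau of `p`; so `σ h = -1` at points arbitrarily close to `y`. -/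
theorem apply_eq_neg_one {y : Y} (h₁ : ∀ᶠ x in 𝓝 y, h x = 1) : σ h y = -1 := by
  refine (isClosed_eq (map_continuous (σ h)) continuous_const).mem_of_frequently_of_tendsto
    (frequently_iff.2 fun {V} hV => ?_) tendsto_id
  obtain ⟨p, hp⟩ := exists_isPlateauBump (inter_mem hV h₁)
  have hσp := hσ.norm_map p hp.norm_eq_one
  obtain ⟨z₁, hσz₁, hpz₁⟩ := exists_apply_eq_neg_one_of_norm_sub_eq_two hσp.le hp.nonneg hp.le_one
    (hσ.norm_sub_self p hp.norm_eq_one)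
  have hσp_h : ‖σ p - h‖ = 2 := norm_sub_eq_two_of_abs_apply hσp.le hh.le (z := z₁) (by
    rw [hσz₁, (hp.mem_of_eq_one z₁ hpz₁).2]
    norm_num)
  obtain ⟨z₂, hσz₂, hpz₂⟩ := exists_apply_eq_neg_one_of_norm_sub_eq_two (hσ.norm_map h hh).le
    hp.nonneg hp.le_one (by rwa [← hσ.norm_sub_comm p h hp.norm_eq_one hh])
  exact ⟨z₂, (hp.mem_of_eq_one z₂ hpz₂).1, hσz₂⟩

theorem apply_le_neg (y : Y) : σ h y ≤ -h y := by
  refine le_of_forall_pos_le_add fun ε hε => ?_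
  obtain ⟨p, hp⟩ := exists_isPlateauBump
    (continuousAt_const.eventually_lt (map_continuous (σ h)).continuousAt (sub_lt_self _ hε))
  obtain ⟨w, hw, hwp, hwσ⟩ :=
    hp.exists_eq_one_on_plateau (hσ.norm_map h hh).le fun x hx => le_of_lt hx
  have hσw : σ w y = -1 := hσ.apply_eq_neg_one hw (hp.eventually_eq_one.mono hwp)
  have := calc
    |σ w y - h y| ≤ ‖σ w - h‖ := by
      simpa only [ZeroAtInftyContinuousMap.sub_apply] using abs_apply_le_norm (σ w - h) y
    _ = ‖w - σ h‖ := by rw [hσ.norm_sub_comm w h hw hh, norm_sub_rev]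
    _ ≤ 1 - (σ h y - ε) := hwσ
  rw [hσw] at this
  linarith [neg_abs_le (-1 - h y)]

theorem eq_neg : σ h = -h := by
  ext y
  have h₂ := hσ.neg_comp_neg.apply_le_neg (h := -h) (by rwa [norm_neg]) y
  simp only [neg_neg, ZeroAtInftyContinuousMap.neg_apply] at h₂ ⊢
  linarith [hσ.apply_le_neg hh y]

end IsSphereAntipode

namespace IsSurjectiveSphereIsometry

variable {E : Type*} [NormedAddCommGroup E] [NormedSpace ℝ E]
  {T : C₀(Y, ℝ) → E} (hT : IsSurjectiveSphereIsometry T)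
include hT

theorem map_neg {f : C₀(Y, ℝ)} (hf : ‖f‖ = 1) : T (-f) = -T f := by
  rw [← hT.isSphereAntipode.eq_neg hf, (hT.sphereAntipode_spec hf).2]

/-- Take a plateau bump `p` inside `V` and a supporting functional `ψ` of a maximal convex subset
`G` of the sphere through `T p`. If `g` is `1` on the plateau of `p`, then `T g` lies in `G`, since
every element of `G` is `T f'` with `f'` peaking together with `p`; so `ψ (T g) ≥ 1`. -/
theorem exists_dual_of_mem_nhds {y : Y} {V : Set Y} (hV : V ∈ 𝓝 y) :
    ∃ ψ : StrongDual ℝ E, ‖ψ‖ ≤ 1 ∧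
      ∀ f : C₀(Y, ℝ), ‖f‖ = 1 → ∀ m : ℝ, (∀ x ∈ V, m ≤ f x) → m ≤ ψ (T f) := by
  obtain ⟨p, hp⟩ := exists_isPlateauBump hV
  obtain ⟨G, hpG, hG⟩ := exists_maximal_convex_subset_sphere (hT.norm_map p hp.norm_eq_one)
  obtain ⟨ψ, hψ, hψG⟩ := exists_norm_le_one_one_le_of_disjoint_ball hG.prop.1
    (disjoint_left.2 fun e he heG => by
      simp_all [mem_sphere_zero_iff_norm.1 (hG.prop.2 heG)])
  refine ⟨ψ, hψ, fun f hf m hm => ?_⟩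
  obtain ⟨g, hg, hgp, hgf⟩ := hp.exists_eq_one_on_plateau hf.le hm
  have hTg : T g ∈ G := by
    refine hG.mem_of_forall_norm_add_eq_two ⟨_, hpG⟩ (hT.norm_map g hg) fun e he => ?_
    obtain ⟨f', hf', rfl⟩ := hT.exists_preimage e (mem_sphere_zero_iff_norm.1 (hG.prop.2 he))
    obtain ⟨z, hf'z, hpz⟩ := exists_apply_eq_one_of_norm_add_eq_two hf'.le hp.nonneg hp.le_one (by
      rw [← hT.norm_add_map (fun _ => hT.map_neg) hf' hp.norm_eq_one,
        hG.prop.1.norm_add_eq_two_of_subset_sphere hG.prop.2 he hpG])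
    rw [hT.norm_add_map (fun _ => hT.map_neg) hg hf', ← sub_neg_eq_add]
    refine norm_sub_eq_two_of_abs_apply hg.le (by rw [norm_neg, hf']) (z := z) ?_
    rw [hgp z hpz, ZeroAtInftyContinuousMap.neg_apply, hf'z]
    norm_num
  have hψg : ψ (T g) - ψ (T f) ≤ ‖T g - T f‖ := by
    rw [← map_sub]
    exact (le_abs_self _).trans ((ψ.le_of_opNorm_le hψ _).trans_eq (one_mul _))
  rw [hT.norm_sub_map g f hg hf] at hψg
  linarith [hψG _ hTg]

theorem exists_dual_apply_eq (y : Y) :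
    ∃ φ : StrongDual ℝ E, ∀ f : C₀(Y, ℝ), ‖f‖ = 1 → φ (T f) = f y := by
  let c : {V : Set Y // V ∈ 𝓝 y} → Set (E × ℝ) := fun V =>
    {q | ∃ f : C₀(Y, ℝ), ‖f‖ = 1 ∧ T f = q.1 ∧ ∀ x ∈ V.1, q.2 ≤ f x}
  have : Nonempty {V : Set Y // V ∈ 𝓝 y} := ⟨⟨univ, univ_mem⟩⟩
  obtain ⟨φ, -, hφ⟩ := exists_norm_le_one_forall_le_of_directed (c := c)
    (fun V W => ⟨⟨V.1 ∩ W.1, inter_mem V.2 W.2⟩,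
      fun _ ⟨f, hf, hq, hfV⟩ => ⟨f, hf, hq, fun x hx => hfV x hx.1⟩,
      fun _ ⟨f, hf, hq, hfW⟩ => ⟨f, hf, hq, fun x hx => hfW x hx.2⟩⟩)
    (fun V => (hT.exists_dual_of_mem_nhds V.2).imp fun ψ ⟨hψ, hψV⟩ =>
      ⟨hψ, fun _ ⟨f, hf, hq, hfV⟩ => hq ▸ hψV f hf _ hfV⟩)
  have hlow : ∀ f : C₀(Y, ℝ), ‖f‖ = 1 → f y ≤ φ (T f) := fun f hf =>
    le_of_forall_pos_le_add fun ε hε => sub_le_iff_le_add.1 <|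
      hφ ⟨_, continuousAt_const.eventually_lt (map_continuous f).continuousAt (sub_lt_self _ hε)⟩
        (T f, f y - ε) ⟨f, hf, rfl, fun x hx => le_of_lt hx⟩
  refine ⟨φ, fun f hf => le_antisymm ?_ (hlow f hf)⟩
  have := hlow (-f) (by rwa [norm_neg])
  rw [hT.map_neg hf, _root_.map_neg, ZeroAtInftyContinuousMap.neg_apply] at this
  linarith

end IsSurjectiveSphereIsometry

end ZeroAtInfty

theorem stmt13_general {Y : Type*} [TopologicalSpace Y] [LocallyCompactSpace Y] [T2Space Y]
    (E : Type*) [NormedAddCommGroup E] [NormedSpace ℝ E]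
    (T : C₀(Y, ℝ) → E)
    (hmap : ∀ f : C₀(Y, ℝ), ‖f‖ = 1 → ‖T f‖ = 1)
    (hsurj : ∀ b : E, ‖b‖ = 1 → ∃ f : C₀(Y, ℝ), ‖f‖ = 1 ∧ T f = b)
    (hiso : ∀ f g : C₀(Y, ℝ), ‖f‖ = 1 → ‖g‖ = 1 → ‖T f - T g‖ = ‖f - g‖) :
    ∃ U : C₀(Y, ℝ) ≃ₗᵢ[ℝ] E, ∀ f : C₀(Y, ℝ), ‖f‖ = 1 → U f = T f := by
  have hT : IsSurjectiveSphereIsometry T := ⟨hmap, hsurj, hiso⟩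
  choose φ hφ using hT.exists_dual_apply_eq
  exact exists_linearIsometryEquiv_extension hmap hsurj ZeroAtInftyContinuousMap.evalₗ
    (fun f hf => ZeroAtInftyContinuousMap.ext hf) φ hφ

/-- For a locally compact Hausdorff space `Y`, the real Banach space
`C₀(Y, ℝ)` satisfies the Mazur-Ulam property: every surjective isometry from its
unit sphere onto the unit sphere of any real Banach space `E` extends to a
surjective real-linear isometry. -/
theorem stmt13 {Y : Type*} [TopologicalSpace Y] [LocallyCompactSpace Y] [T2Space Y]
    (E : Type*) [NormedAddCommGroup E] [NormedSpace ℝ E] [CompleteSpace E]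
    (T : C₀(Y, ℝ) → E)
    (hmap : ∀ f : C₀(Y, ℝ), ‖f‖ = 1 → ‖T f‖ = 1)
    (hsurj : ∀ b : E, ‖b‖ = 1 → ∃ f : C₀(Y, ℝ), ‖f‖ = 1 ∧ T f = b)
    (hiso : ∀ f g : C₀(Y, ℝ), ‖f‖ = 1 → ‖g‖ = 1 → ‖T f - T g‖ = ‖f - g‖) :
    ∃ U : C₀(Y, ℝ) ≃ₗᵢ[ℝ] E, ∀ f : C₀(Y, ℝ), ‖f‖ = 1 → U f = T f :=
  stmt13_general E T hmap hsurj hiso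
end

section
/- Let B₁, B₂ be real Banach spaces, T : S(B₁) → S(B₂) a surjective isometry, and P₁ a set of representatives for S(B₁). Let φ and τ be defined by T(F_{p,λ}) = F_{φ(p), τ(p,λ)} for (p,λ) ∈ P₁ × {±1} (φ independent of λ since T(−F) = −T(F)). Then for every p ∈ P₁ and every α ∈ [−1,1], T(M_{p,α}) = M_{φ(p), α·τ(p,1)}. -/
/-!
The restriction of `T` to the unit sphere is an isometry carrying the face `F_{p,s}` onto
`F_{φ(p), s τ(p,1)}` for `s = ±1`, so it preserves the distance from a point of the sphere to
these faces. Now `M_{p,α}` is cut out of the sphere by distance bounds to the faces `F_{p,±ν}`,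
where `ν` is any sign of `α`, and `ν τ(p,1)` is a sign of `α τ(p,1)`, with `|α τ(p,1)| = |α|`.
-/

/-- A maximal convex subset of the unit sphere of `B`. -/
def IsMaximalConvexSubsetR {B : Type*} [NormedAddCommGroup B] [Module ℝ B] (F : Set B) : Prop :=
  Convex ℝ F ∧ F ⊆ {a : B | ‖a‖ = 1} ∧
    ∀ G : Set B, Convex ℝ G → G ⊆ {a : B | ‖a‖ = 1} → F ⊆ G → G = F

/-- The face `F_{p,λ} = {a ∈ S(B) : p(a) = λ}` (real case). -/
def faceSetR {B : Type*} [NormedAddCommGroup B] [NormedSpace ℝ B]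
    (p : StrongDual ℝ B) (lam : ℝ) : Set B :=
  {a : B | ‖a‖ = 1 ∧ p a = lam}

/-- `P` is a set of representatives for the maximal convex subsets of the sphere of a
real Banach space `B`: every maximal convex subset is `F_{p,λ}` for a unique
`(p,λ) ∈ P × {±1}`, and every such `F_{p,λ}` is maximal convex. -/
def IsRepresentativeSetR {B : Type*} [NormedAddCommGroup B] [NormedSpace ℝ B]
    (P : Set (StrongDual ℝ B)) : Prop :=
  (∀ F : Set B, IsMaximalConvexSubsetR F →
    ∃ p ∈ P, ∃ lam : ℝ, |lam| = 1 ∧ F = faceSetR p lam) ∧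
  (∀ p ∈ P, ∀ lam : ℝ, |lam| = 1 → IsMaximalConvexSubsetR (faceSetR p lam)) ∧
  (∀ p ∈ P, ∀ p' ∈ P, ∀ lam lam' : ℝ, |lam| = 1 → |lam'| = 1 →
    faceSetR p lam = faceSetR p' lam' → p = p' ∧ lam = lam')

/-- The set `M_{p,α}` for a real Banach space (with `α/|α|` read as `1` for `α = 0`);
the extended distance `infEdist` is used, so the distance to `∅` is `∞`. -/
def MsetR {B : Type*} [NormedAddCommGroup B] [NormedSpace ℝ B]
    (p : StrongDual ℝ B) (α : ℝ) : Set B :=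
  {a : B | ‖a‖ = 1 ∧
    EMetric.infEdist a (faceSetR p (if α = 0 then 1 else α / |α|)) ≤
      ENNReal.ofReal (1 - |α|) ∧
    EMetric.infEdist a (faceSetR p (-(if α = 0 then 1 else α / |α|))) ≤
      ENNReal.ofReal (1 + |α|)}

open Metric

theorem infEDist_image_of_dist_eq {X Y : Type*} [PseudoMetricSpace X] [PseudoMetricSpace Y]
    {T : X → Y} {S : Set X} (hT : ∀ x ∈ S, ∀ y ∈ S, dist (T x) (T y) = dist x y)
    {a : X} (ha : a ∈ S) {F : Set X} (hF : F ⊆ S) :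
    infEDist (T a) (T '' F) = infEDist a F := by
  simp only [infEDist, iInf_image]
  exact iInf_congr fun y => iInf_congr fun hy => by
    rw [edist_dist, edist_dist, hT a ha y (hF hy)]

theorem image_eq_of_forall_mem_iff {X Y : Type*} {T : X → Y} {S : Set X} {S' : Set Y}
    {A : Set X} {A' : Set Y} (hA : A ⊆ S) (hA' : A' ⊆ S') (hsurj : ∀ b ∈ S', ∃ a ∈ S, T a = b)
    (hmem : ∀ a ∈ S, a ∈ A ↔ T a ∈ A') : T '' A = A' := by
  ext b
  constructor
  · rintro ⟨a, haA, rfl⟩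
    exact (hmem a (hA haA)).mp haA
  · intro hb
    obtain ⟨a, ha, rfl⟩ := hsurj b (hA' hb)
    exact ⟨a, (hmem a ha).mpr hb, rfl⟩

theorem apply_eq_mul_apply_one_of_abs_eq_one {f : ℝ → ℝ} (hf : f (-1) = -f 1) {s : ℝ}
    (hs : |s| = 1) : f s = s * f 1 := by
  rcases (abs_eq zero_le_one).mp hs with rfl | rfl
  · ring
  · rw [hf]; ring

theorem exists_abs_eq_one_and_eq_abs_mul (α : ℝ) : ∃ ν : ℝ, |ν| = 1 ∧ α = |α| * ν := by
  rcases le_total 0 α with h | h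
  · exact ⟨1, abs_one, by rw [abs_of_nonneg h, mul_one]⟩
  · exact ⟨-1, by norm_num, by rw [abs_of_nonpos h]; ring⟩

/-- Any sign `ν` of `α` may be used: for `α = 0` both choices `ν = ±1` give the same set,
since then both distance bounds are `1`. -/
theorem mem_MsetR_iff {B : Type*} [NormedAddCommGroup B] [NormedSpace ℝ B]
    {p : StrongDual ℝ B} {α ν : ℝ} (hν : |ν| = 1) (hαν : α = |α| * ν) {a : B} :
    a ∈ MsetR p α ↔ ‖a‖ = 1 ∧ infEDist a (faceSetR p ν) ≤ ENNReal.ofReal (1 - |α|) ∧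
      infEDist a (faceSetR p (-ν)) ≤ ENNReal.ofReal (1 + |α|) := by
  by_cases h0 : α = 0
  · subst h0
    rcases (abs_eq zero_le_one).mp hν with rfl | rfl
    · simp only [MsetR, if_true]; rfl
    · simp only [MsetR, if_true, abs_zero, sub_zero, add_zero, neg_neg]
      exact and_congr_right fun _ => and_comm
  · have : α / |α| = ν := by
      rw [div_eq_iff (abs_ne_zero.mpr h0), mul_comm]; exact hαν
    simp only [MsetR, if_neg h0, this]; rfl

theorem stmt18_general {B₁ B₂ : Type*} [NormedAddCommGroup B₁] [NormedSpace ℝ B₁]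
    [NormedAddCommGroup B₂] [NormedSpace ℝ B₂]
    (T : B₁ → B₂)
    (hmap : ∀ a : B₁, ‖a‖ = 1 → ‖T a‖ = 1)
    (hsurj : ∀ b : B₂, ‖b‖ = 1 → ∃ a : B₁, ‖a‖ = 1 ∧ T a = b)
    (hiso : ∀ a b : B₁, ‖a‖ = 1 → ‖b‖ = 1 → ‖T a - T b‖ = ‖a - b‖)
    (P₁ : Set (StrongDual ℝ B₁)) (P₂ : Set (StrongDual ℝ B₂))
    (φ : StrongDual ℝ B₁ → StrongDual ℝ B₂)
    (τ : StrongDual ℝ B₁ → ℝ → ℝ)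
    (hφτ : ∀ p ∈ P₁, ∀ lam : ℝ, |lam| = 1 →
      φ p ∈ P₂ ∧ |τ p lam| = 1 ∧ T '' faceSetR p lam = faceSetR (φ p) (τ p lam))
    (hτneg : ∀ p ∈ P₁, τ p (-1) = -(τ p 1)) :
    ∀ p ∈ P₁, ∀ α : ℝ, α ∈ Set.Icc (-1 : ℝ) 1 →
      T '' MsetR p α = MsetR (φ p) (α * τ p 1) := by
  intro p hp α _
  have hc : |τ p 1| = 1 := (hφτ p hp 1 abs_one).2.1
  have hdist : ∀ a : B₁, ‖a‖ = 1 → ∀ s : ℝ, |s| = 1 →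
      infEDist (T a) (faceSetR (φ p) (s * τ p 1)) = infEDist a (faceSetR p s) := by
    intro a ha s hs
    rw [← apply_eq_mul_apply_one_of_abs_eq_one (hτneg p hp) hs, ← (hφτ p hp s hs).2.2]
    refine infEDist_image_of_dist_eq (S := {a | ‖a‖ = 1}) (fun x hx y hy => ?_) ha
      fun x hx => hx.1
    rw [dist_eq_norm, dist_eq_norm, hiso x y hx hy]
  obtain ⟨ν, hν, hαν⟩ := exists_abs_eq_one_and_eq_abs_mul α
  have habs : |α * τ p 1| = |α| := by rw [abs_mul, hc, mul_one]
  have hνc : |ν * τ p 1| = 1 := by rw [abs_mul, hν, hc, one_mul]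
  have hανc : α * τ p 1 = |α * τ p 1| * (ν * τ p 1) := by rw [habs, ← mul_assoc, ← hαν]
  refine image_eq_of_forall_mem_iff (fun a ha => ha.1) (fun b hb => hb.1) hsurj
    fun a (ha : ‖a‖ = 1) => ?_
  rw [mem_MsetR_iff hν hαν, mem_MsetR_iff hνc hανc, habs, ← neg_mul,
    hdist a ha ν hν, hdist a ha (-ν) (by rwa [abs_neg])]
  simp only [ha, hmap a ha]

/-- For real Banach spaces `B₁, B₂`, a surjective isometry `T` of
their unit spheres, a set of representatives `P₁` (resp. `P₂`), and the induced
maps `φ, τ` with `T(F_{p,λ}) = F_{φ(p), τ(p,λ)}` and `τ(p,-1) = -τ(p,1)`, one has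
`T(M_{p,α}) = M_{φ(p), α·τ(p,1)}` for every `p ∈ P₁` and `α ∈ [-1,1]`. -/
theorem stmt18 {B₁ B₂ : Type*} [NormedAddCommGroup B₁] [NormedSpace ℝ B₁] [CompleteSpace B₁]
    [NormedAddCommGroup B₂] [NormedSpace ℝ B₂] [CompleteSpace B₂]
    (T : B₁ → B₂)
    (hmap : ∀ a : B₁, ‖a‖ = 1 → ‖T a‖ = 1)
    (hsurj : ∀ b : B₂, ‖b‖ = 1 → ∃ a : B₁, ‖a‖ = 1 ∧ T a = b)
    (hiso : ∀ a b : B₁, ‖a‖ = 1 → ‖b‖ = 1 → ‖T a - T b‖ = ‖a - b‖)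
    (P₁ : Set (StrongDual ℝ B₁)) (P₂ : Set (StrongDual ℝ B₂))
    (hP₁ : IsRepresentativeSetR P₁) (hP₂ : IsRepresentativeSetR P₂)
    (φ : StrongDual ℝ B₁ → StrongDual ℝ B₂)
    (τ : StrongDual ℝ B₁ → ℝ → ℝ)
    (hφτ : ∀ p ∈ P₁, ∀ lam : ℝ, |lam| = 1 →
      φ p ∈ P₂ ∧ |τ p lam| = 1 ∧ T '' faceSetR p lam = faceSetR (φ p) (τ p lam))
    (hτneg : ∀ p ∈ P₁, τ p (-1) = -(τ p 1)) :
    ∀ p ∈ P₁, ∀ α : ℝ, α ∈ Set.Icc (-1 : ℝ) 1 →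
      T '' MsetR p α = MsetR (φ p) (α * τ p 1) :=
  stmt18_general T hmap hsurj hiso P₁ P₂ φ τ hφτ hτneg
end
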